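/- Fix an integer d ≥ 1 and T > 0. The set 𝕄_T, regarded as a subset of the space C([0,T], ℝ^d) of continuous ℝ^d-valued functions with the supremum metric via t ↦ (ν(t,1), …, ν(t,d)), is a compact subset of C([0,T], ℝ^d). -/

import Mathlib

/-!
A path `ν ∈ 𝕄_T` has nonnegative, nondecreasing coordinates summing to `t`; such paths form a
closed subset of a product of compact intervals, and each of them is `1`-Lipschitz. Conversely,
a path with these properties is Lipschitz, hence each coordinate is absolutely continuous and is
the integral of its derivative; by Lebesgue's theorem the derivatives exist a.e., are
nonnegative and sum to `1` a.e. on `(0,T)`, so after a change on a null set they form a kernel.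
Thus `𝕄_T` is exactly this set of paths, which is pointwise compact and equicontinuous, and
Arzelà–Ascoli applies.
-/

open MeasureTheory

/-- A kernel on `[0,T] × {1,…,d}`: a Borel measurable function `K` with `K s i ≥ 0`
and `∑ i, K s i = 1` for every `s ∈ [0,T]`. -/
def IsMKernel (d : ℕ) (T : ℝ) (K : ℝ → Fin d → ℝ) : Prop :=
  (∀ i : Fin d, Measurable fun s => K s i) ∧
    ∀ s ∈ Set.Icc (0:ℝ) T, (∀ i : Fin d, 0 ≤ K s i) ∧ ∑ i : Fin d, K s i = 1

/-- The space `𝕄_T` of occupation-measure paths, viewed as a subset of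
`C([0,T], ℝ^d)` with the supremum metric. -/
def MT (d : ℕ) (T : ℝ) : Set C(Set.Icc (0:ℝ) T, Fin d → ℝ) :=
  {ν | ∃ K : ℝ → Fin d → ℝ, IsMKernel d T K ∧
    ∀ t : Set.Icc (0:ℝ) T, ∀ i : Fin d, ν t i = ∫ s in (0:ℝ)..(t:ℝ), K s i}

open Set Filter Topology NNReal

theorem dist_le_dist_of_monotone_of_sum_eq {α ι : Type*} [LinearOrder α] [Fintype ι]
    {f : α → ι → ℝ} {φ : α → ℝ} (hf : Monotone f) (hsum : ∀ t, ∑ i, f t i = φ t) (x y : α) :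
    dist (f x) (f y) ≤ dist (φ x) (φ y) := by
  wlog hxy : x ≤ y generalizing x y
  · rw [dist_comm, dist_comm (φ x)]
    exact this y x (le_of_not_ge hxy)
  refine (dist_pi_le_iff dist_nonneg).2 fun i => ?_
  have hinc : ∀ j, 0 ≤ f y j - f x j := fun j => sub_nonneg.2 (hf hxy j)
  calc dist (f x i) (f y i) = f y i - f x i := by
        rw [Real.dist_eq, abs_sub_comm, abs_of_nonneg (hinc i)]
    _ ≤ ∑ j, (f y j - f x j) := Finset.single_le_sum (fun j _ => hinc j) (Finset.mem_univ i)
    _ = φ y - φ x := by rw [Finset.sum_sub_distrib, hsum, hsum]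
    _ ≤ dist (φ x) (φ y) := by rw [dist_comm, Real.dist_eq]; exact le_abs_self _

def occupationPaths (d : ℕ) (T : ℝ) : Set (Icc (0:ℝ) T → Fin d → ℝ) :=
  {f | 0 ≤ f ∧ Monotone f ∧ ∀ t, ∑ i, f t i = t}

section occupationPaths

variable {d : ℕ} {T : ℝ}

theorem lipschitzWith_one_of_mem_occupationPaths {f : Icc (0:ℝ) T → Fin d → ℝ}
    (hf : f ∈ occupationPaths d T) : LipschitzWith 1 f :=
  LipschitzWith.of_dist_le_mul fun x y => by
    simpa [Subtype.dist_eq] using dist_le_dist_of_monotone_of_sum_eq hf.2.1 hf.2.2 x y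

theorem isCompact_occupationPaths : IsCompact (occupationPaths d T) := by
  have hsum : IsClosed {f : Icc (0:ℝ) T → Fin d → ℝ | ∀ t, ∑ i, f t i = t} := by
    simp only [ofPred_forall]
    exact isClosed_iInter fun t => isClosed_eq (by fun_prop) continuous_const
  have hclosed : IsClosed (occupationPaths d T) :=
    (isClosed_le continuous_const continuous_id).inter (isClosed_monotone.inter hsum)
  refine (isCompact_Icc (b := fun _ _ => T)).of_isClosed_subset hclosed
    fun f hf => ⟨hf.1, fun t i => ?_⟩
  calc f t i ≤ ∑ j, f t j := Finset.single_le_sum (fun j _ => hf.1 t j) (Finset.mem_univ i)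
    _ = t := hf.2.2 t
    _ ≤ T := t.2.2

end occupationPaths

section kernel

variable {d : ℕ} {T : ℝ} {K : ℝ → Fin d → ℝ}

theorem IsMKernel.le_one (hK : IsMKernel d T K) {s : ℝ} (hs : s ∈ Icc 0 T) (i : Fin d) :
    K s i ≤ 1 :=
  (hK.2 s hs).2 ▸ Finset.single_le_sum (fun j _ => (hK.2 s hs).1 j) (Finset.mem_univ i)

theorem IsMKernel.intervalIntegrable (hK : IsMKernel d T K) (i : Fin d) {a b : ℝ}
    (ha : a ∈ Icc 0 T) (hb : b ∈ Icc 0 T) :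
    IntervalIntegrable (fun s => K s i) volume a b := by
  refine (intervalIntegrable_const (c := (1:ℝ))).mono_fun'
    (hK.1 i).aestronglyMeasurable.restrict ?_
  refine (ae_restrict_iff' measurableSet_uIoc).2 (Eventually.of_forall fun s hs => ?_)
  have hs' : s ∈ Icc 0 T := uIcc_subset_Icc ha hb (uIoc_subset_uIcc hs)
  simpa only [Real.norm_of_nonneg ((hK.2 s hs').1 i)] using hK.le_one hs' i

theorem IsMKernel.integral_mem_occupationPaths (hK : IsMKernel d T K) :
    (fun (t : Icc (0:ℝ) T) i => ∫ s in (0:ℝ)..t, K s i) ∈ occupationPaths d T := by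
  have hKi : ∀ t : Icc (0:ℝ) T, ∀ i, IntervalIntegrable (fun s => K s i) volume 0 t :=
    fun t i => hK.intervalIntegrable i ⟨le_rfl, t.2.1.trans t.2.2⟩ t.2
  refine ⟨fun t i => ?_, fun s t hst i => ?_, fun t => ?_⟩
  · exact intervalIntegral.integral_nonneg t.2.1
      fun u hu => (hK.2 u ⟨hu.1, hu.2.trans t.2.2⟩).1 i
  · refine intervalIntegral.integral_mono_interval le_rfl s.2.1 hst ?_ (hKi t i)
    exact (ae_restrict_iff' measurableSet_Ioc).2 <|
      Eventually.of_forall fun u hu => (hK.2 u ⟨hu.1.le, hu.2.trans t.2.2⟩).1 i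
  · rw [← intervalIntegral.integral_finsetSum fun i _ => hKi t i,
      intervalIntegral.integral_congr (g := fun _ => 1) fun u hu => ?_]
    · simp
    · rw [uIcc_of_le t.2.1] at hu
      exact (hK.2 u ⟨hu.1, hu.2.trans t.2.2⟩).2

end kernel

theorem exists_isMKernel_integral_eq_sub {d : ℕ} (hd : 1 ≤ d) {T : ℝ} {C : ℝ≥0}
    {g : Fin d → ℝ → ℝ} (hmono : ∀ i, Monotone (g i)) (hlip : ∀ i, LipschitzWith C (g i))
    (hsum : ∀ s ∈ Ioo 0 T, ∑ i, g i s = s) :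
    ∃ K, IsMKernel d T K ∧ ∀ t ∈ Icc 0 T, ∀ i, ∫ s in (0:ℝ)..t, K s i = g i t - g i 0 := by
  have hsum_deriv : ∀ᵐ s, s ∈ Ioo 0 T → ∑ i, deriv (g i) s = 1 := by
    filter_upwards [ae_all_iff.2 fun i => (hmono i).ae_differentiableAt] with s hdiff hs
    have hloc : (fun y => ∑ i, g i y) =ᶠ[𝓝 s] id :=
      eventually_of_mem (Ioo_mem_nhds hs.1 hs.2) hsum
    rw [← deriv_fun_sum fun i _ => hdiff i, hloc.deriv_eq, deriv_id]
  let K : ℝ → Fin d → ℝ := fun s i =>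
    if ∑ j, deriv (g j) s = 1 then deriv (g i) s else (d:ℝ)⁻¹
  refine ⟨K, ⟨fun i => ?_, fun s _ => ⟨fun i => ?_, ?_⟩⟩, fun t ht i => ?_⟩
  · refine Measurable.ite ?_ (measurable_deriv _) measurable_const
    exact (Finset.measurable_sum _ fun j _ => measurable_deriv (g j)) (measurableSet_singleton 1)
  · dsimp only [K]
    split_ifs
    exacts [(hmono i).deriv_nonneg, by positivity]
  · dsimp only [K]
    split_ifs with h
    · exact h
    · simp [Finset.card_univ, Nat.cast_ne_zero.2 (by omega : d ≠ 0)]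
  · rw [← ((hlip i).lipschitzOnWith.absolutelyContinuousOnInterval).integral_deriv_eq_sub]
    refine intervalIntegral.integral_congr_ae ?_
    filter_upwards [hsum_deriv, volume.ae_ne T] with s hs hsT hst
    rw [uIoc_of_le ht.1] at hst
    simp only [K, if_pos (hs ⟨hst.1, lt_of_le_of_ne (hst.2.trans ht.2) hsT⟩)]

theorem mem_MT_iff {d : ℕ} (hd : 1 ≤ d) {T : ℝ} (hT : 0 ≤ T) {ν : C(Icc (0:ℝ) T, Fin d → ℝ)} :
    ν ∈ MT d T ↔ ⇑ν ∈ occupationPaths d T := by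
  constructor
  · rintro ⟨K, hK, hν⟩
    rw [show ⇑ν = _ from funext₂ hν]
    exact hK.integral_mem_occupationPaths
  · intro hν
    let g : Fin d → ℝ → ℝ := fun i s => ν (projIcc 0 T hT s) i
    have hmono : ∀ i, Monotone (g i) := fun i a b hab => hν.2.1 (monotone_projIcc hT hab) i
    have hlip : ∀ i, LipschitzWith (1 * (1 * 1)) (g i) := fun i =>
      (LipschitzWith.eval i).comp
        ((lipschitzWith_one_of_mem_occupationPaths hν).comp (LipschitzWith.projIcc hT))
    have hsum : ∀ s ∈ Ioo 0 T, ∑ i, g i s = s := fun s hs => by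
      simp only [g, hν.2.2, projIcc_of_mem hT (Ioo_subset_Icc_self hs)]
    have hν0 : ∀ i, g i 0 = 0 := fun i =>
      (Finset.sum_eq_zero_iff_of_nonneg fun j _ => hν.1 _ j).1 (by simp [hν.2.2]) i
        (Finset.mem_univ i)
    obtain ⟨K, hK, hKint⟩ := exists_isMKernel_integral_eq_sub hd hmono hlip hsum
    refine ⟨K, hK, fun t i => ?_⟩
    rw [hKint t t.2 i, hν0, sub_zero]
    simp [g]

theorem MT_isCompact (d : ℕ) (hd : 1 ≤ d) (T : ℝ) (hT : 0 < T) :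
    IsCompact (MT d T) := by
  have hMT : ∀ ν ∈ MT d T, ⇑ν ∈ occupationPaths d T := fun ν => (mem_MT_iff hd hT.le).1
  refine ArzelaAscoli.isCompact_of_equicontinuous _ ?_ ?_
  · convert isCompact_occupationPaths (d := d) (T := T)
    refine Subset.antisymm (image_subset_iff.2 hMT) fun f hf => ?_
    let ν : C(Icc (0:ℝ) T, Fin d → ℝ) :=
      ⟨f, (lipschitzWith_one_of_mem_occupationPaths hf).continuous⟩
    exact ⟨ν, (mem_MT_iff hd hT.le).2 hf, rfl⟩
  · exact (LipschitzWith.uniformEquicontinuous _ 1 fun ν : MT d T =>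
      lipschitzWith_one_of_mem_occupationPaths (hMT ν ν.2)).equicontinuous
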